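/- For a two-qubit separable coupling σ of (I/2, I/2) with matrix entries such that σ has diagonal x, y, z, w = x (in computational basis order |00⟩,|01⟩,|10⟩,|11⟩) and corner entry v = σ₀₀,₁₁, positivity of σ and of its partial transpose imply x² ≥ |v|² and (1/2 − x)² ≥ |v|², and hence tr(Aσ) = (1 + 2x + 2Re(v))/3 ≤ 2/3 for A = (1/3)(2|00⟩⟨00| + |01⟩⟨01| + |10⟩⟨10| + 2|11⟩⟨11| + |00⟩⟨11| + |11⟩⟨00|). -/

import Mathlib

open Matrix
open scoped ComplexOrder

noncomputable section

open Matrix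
open scoped ComplexOrder

lemma quad_form_eval {n : Type*} [Fintype n] [DecidableEq n] (M : Matrix n n ℂ)
    {i j : n} (hij : i ≠ j) (a b : ℂ) :
    star (Pi.single i a + Pi.single j b : n → ℂ) ⬝ᵥ M *ᵥ (Pi.single i a + Pi.single j b : n → ℂ)
      = starRingEnd ℂ a * M i i * a + starRingEnd ℂ a * M i j * b
        + starRingEnd ℂ b * M j i * a + starRingEnd ℂ b * M j j * b := by
  have hs : star (Pi.single i a + Pi.single j b : n → ℂ)
      = (Pi.single i (starRingEnd ℂ a) + Pi.single j (starRingEnd ℂ b) : n → ℂ) := by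
    funext k
    by_cases h1 : k = i <;> by_cases h2 : k = j <;>
      simp_all [Pi.single_apply, hij]
  rw [hs, mulVec_add, mulVec_single, mulVec_single]
  simp only [add_dotProduct, single_dotProduct, Pi.add_apply]
  simp only [Pi.smul_apply, Matrix.col_apply, op_smul_eq_mul]
  ring

lemma diag_re_nonneg {n : Type*} [Fintype n] [DecidableEq n] {M : Matrix n n ℂ}
    (hM : M.PosSemidef) (i : n) : 0 ≤ (M i i).re := by
  have h := hM.re_dotProduct_nonneg (Pi.single i 1 : n → ℂ)
  have hs : star (Pi.single i (1:ℂ) : n → ℂ) = (Pi.single i 1 : n → ℂ) := by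
    funext k; by_cases hk : k = i <;> simp_all [Pi.single_apply]
  rw [hs, mulVec_single, single_dotProduct] at h
  simpa using h

lemma entry_sq_le {n : Type*} [Fintype n] [DecidableEq n] {M : Matrix n n ℂ}
    (hM : M.PosSemidef) {i j : n} (hij : i ≠ j) :
    ‖M i j‖ ^ 2 ≤ (M i i).re * (M j j).re := by
  set α := (M i i).re with hα
  set β := (M j j).re with hβd
  set c := M i j with hc
  set N : ℝ := Complex.normSq c with hN
  have hKN : ‖c‖ ^ 2 = N := Complex.sq_norm c
  have hji : M j i = starRingEnd ℂ c := by
    rw [hc, ← hM.1.apply i j]; simp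
  have hii : M i i = (α : ℂ) := by
    have := hM.1.apply i i
    exact (Complex.conj_eq_iff_re.mp (by simpa using this)).symm
  have hjj : M j j = (β : ℂ) := by
    have := hM.1.apply j j
    exact (Complex.conj_eq_iff_re.mp (by simpa using this)).symm
  have hcc : c * starRingEnd ℂ c = (N : ℂ) := Complex.mul_conj c
  have key : ∀ t r : ℝ, 0 ≤ t^2 * α - 2*t*r*N + r^2*N*β := by
    intro t r
    have h := hM.re_dotProduct_nonneg
      (Pi.single i (t:ℂ) + Pi.single j (-(r:ℂ) * starRingEnd ℂ c))
    rw [quad_form_eval M hij] at h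
    have e : (starRingEnd ℂ) (t:ℂ) * M i i * ↑t
        + (starRingEnd ℂ) (t:ℂ) * M i j * (-(r:ℂ) * starRingEnd ℂ c)
        + (starRingEnd ℂ) (-(r:ℂ) * starRingEnd ℂ c) * M j i * ↑t
        + (starRingEnd ℂ) (-(r:ℂ) * starRingEnd ℂ c) * M j j * (-(r:ℂ) * starRingEnd ℂ c)
        = ((t^2 * α - 2*t*r*N + r^2*N*β : ℝ) : ℂ) := by
      rw [hii, hjj, hji, ← hc]
      simp only [_root_.map_mul, map_neg, Complex.conj_conj, Complex.conj_ofReal]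
      push_cast
      linear_combination (-(t:ℂ)*r - (t:ℂ)*r + (r:ℂ)^2*(β:ℂ)) * hcc
    rw [e] at h
    simp only [RCLike.re_to_complex, Complex.ofReal_re] at h
    exact h
  have hα0 : 0 ≤ α := diag_re_nonneg hM i
  have hβ0 : 0 ≤ β := diag_re_nonneg hM j
  rw [hKN]
  by_cases hN0 : N = 0
  · rw [hN0]; exact mul_nonneg hα0 hβ0
  · have hNpos : 0 < N := lt_of_le_of_ne (Complex.normSq_nonneg c) (Ne.symm hN0)
    by_cases hb : β = 0
    · exfalso
      have h := key 1 ((α+1)/(2*N))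
      rw [hb] at h
      have : (2:ℝ)*1*((α+1)/(2*N))*N = α + 1 := by field_simp
      nlinarith
    · have hbpos : 0 < β := lt_of_le_of_ne hβ0 (Ne.symm hb)
      have h := key β 1
      nlinarith


def ptr2 {n m : Type*} [Fintype m] (ρ : Matrix (n × m) (n × m) ℂ) : Matrix n n ℂ :=
  Matrix.of fun i j => ∑ k, ρ (i, k) (j, k)

def ptr1 {n m : Type*} [Fintype n] (ρ : Matrix (n × m) (n × m) ℂ) : Matrix m m ℂ :=
  Matrix.of fun i j => ∑ k, ρ (k, i) (k, j)

/-- Partial transpose with respect to the second tensor factor. -/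
def ptrans {n m : Type*} (ρ : Matrix (n × m) (n × m) ℂ) : Matrix (n × m) (n × m) ℂ :=
  Matrix.of fun a b => ρ (a.1, b.2) (b.1, a.2)

def Aop : Matrix (Fin 2 × Fin 2) (Fin 2 × Fin 2) ℂ :=
  (1 / 3 : ℂ) • Matrix.of fun p q =>
    if p = q then (if p.1 = p.2 then 2 else 1)
    else if p.1 = p.2 ∧ q.1 = q.2 then 1 else 0

/-- For a PPT (separable) two-qubit coupling σ of (I/2, I/2) with diagonal
(x, 1/2−x, 1/2−x, x) and corner entry v = σ₍₀₀₎,₍₁₁₎, positivity of σ and of its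
partial transpose give x² ≥ |v|² and (1/2 − x)² ≥ |v|², hence
tr(Aσ) = (1 + 2x + 2 Re v)/3 ≤ 2/3. -/
theorem separable_coupling_bound
    (σ : Matrix (Fin 2 × Fin 2) (Fin 2 × Fin 2) ℂ)
    (hσ : σ.PosSemidef) (hPT : (ptrans σ).PosSemidef)
    (hm2 : ptr2 σ = (1 / 2 : ℂ) • 1) (hm1 : ptr1 σ = (1 / 2 : ℂ) • 1) :
    let x : ℝ := (σ (0, 0) (0, 0)).re
    let v : ℂ := σ (0, 0) (1, 1)
    ‖v‖ ^ 2 ≤ x ^ 2 ∧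
    ‖v‖ ^ 2 ≤ (1 / 2 - x) ^ 2 ∧
    ((Aop * σ).trace).re = (1 + 2 * x + 2 * v.re) / 3 ∧
    ((Aop * σ).trace).re ≤ 2 / 3 := by
  intro x v
  -- marginal equations
  have e1 : σ (0,0) (0,0) + σ (0,1) (0,1) = 1/2 := by
    have := congrFun (congrFun hm2 0) 0
    simpa [ptr2, Fin.sum_univ_two] using this
  have e2 : σ (1,0) (1,0) + σ (1,1) (1,1) = 1/2 := by
    have := congrFun (congrFun hm2 1) 1
    simpa [ptr2, Fin.sum_univ_two] using this
  have e3 : σ (0,1) (0,1) + σ (1,1) (1,1) = 1/2 := by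
    have := congrFun (congrFun hm1 1) 1
    simpa [ptr1, Fin.sum_univ_two] using this
  have h11 : σ (1,1) (1,1) = σ (0,0) (0,0) := by linear_combination e3 - e1
  have h01 : σ (0,1) (0,1) = 1/2 - σ (0,0) (0,0) := by linear_combination e1
  have h10 : σ (1,0) (1,0) = 1/2 - σ (0,0) (0,0) := by linear_combination e2 - h11
  -- first inequality
  have ineq1 : ‖v‖ ^ 2 ≤ x ^ 2 := by
    have h := entry_sq_le hσ (i := (0,0)) (j := (1,1)) (by decide)
    rw [h11] at h
    calc ‖v‖ ^ 2 ≤ x * x := h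
    _ = x ^ 2 := (sq x).symm
  -- second inequality
  have ineq2 : ‖v‖ ^ 2 ≤ (1/2 - x) ^ 2 := by
    have h := entry_sq_le hPT (i := ((0:Fin 2),(1:Fin 2))) (j := ((1:Fin 2),(0:Fin 2))) (by decide)
    have hv : ptrans σ ((0:Fin 2),(1:Fin 2)) ((1:Fin 2),(0:Fin 2)) = v := rfl
    have hd1 : ptrans σ ((0:Fin 2),(1:Fin 2)) ((0:Fin 2),(1:Fin 2)) = σ (0,1) (0,1) := rfl
    have hd2 : ptrans σ ((1:Fin 2),(0:Fin 2)) ((1:Fin 2),(0:Fin 2)) = σ (1,0) (1,0) := rfl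
    rw [hv, hd1, hd2, h01, h10] at h
    have hre : ((1/2 : ℂ) - σ (0,0) (0,0)).re = 1/2 - x := by simp [x]
    rw [hre] at h
    calc ‖v‖ ^ 2 ≤ (1/2 - x) * (1/2 - x) := h
    _ = (1/2 - x) ^ 2 := (sq _).symm
  -- trace value
  have hvbar : σ (1,1) (0,0) = starRingEnd ℂ (σ (0,0) (1,1)) := by
    rw [← hσ.1.apply (1,1) (0,0)]; rfl
  have htr : (Aop * σ).trace = (1/3 : ℂ) * (2 * σ (0,0) (0,0) + σ (0,1) (0,1)
      + σ (1,0) (1,0) + 2 * σ (1,1) (1,1) + σ (0,0) (1,1) + σ (1,1) (0,0)) := by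
    simp [Matrix.trace, Matrix.mul_apply, Fintype.sum_prod_type, Fin.sum_univ_two, Aop,
      Matrix.diag, Prod.ext_iff]
    ring
  have htrre : ((Aop * σ).trace).re
      = (1 + 2 * (σ (0,0) (0,0)).re + 2 * (σ (0,0) (1,1)).re) / 3 := by
    rw [htr, h11, h01, h10, hvbar]
    have e : (2 * σ (0,0) (0,0) + (1/2 - σ (0,0) (0,0)) + (1/2 - σ (0,0) (0,0))
        + 2 * σ (0,0) (0,0) + σ (0,0) (1,1) + starRingEnd ℂ (σ (0,0) (1,1)))
        = 1 + 2 * σ (0,0) (0,0) + ((2 * (σ (0,0) (1,1)).re : ℝ) : ℂ) := by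
      have hac := Complex.add_conj (σ (0,0) (1,1))
      push_cast at hac ⊢
      linear_combination hac
    rw [e]
    have hre : (σ (0,0) (0,0)).im = 0 := by
      have := hσ.1.apply (0,0) (0,0)
      have h2 := congrArg Complex.im this
      simp only [Complex.star_def, Complex.conj_im] at h2
      linarith
    simp [Complex.mul_re, Complex.add_re, Complex.mul_im, hre]
    ring
  have hx0 : (1:ℝ)/2 - x ≥ 0 := by
    have h := diag_re_nonneg hσ ((0:Fin 2),(1:Fin 2))
    have hr : (σ (0,1) (0,1)).re = 1/2 - x := by
      rw [h01]
      show ((1/2 : ℂ) - σ (0,0) (0,0)).re = 1/2 - (σ (0,0) (0,0)).re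
      simp [Complex.sub_re]
    linarith [hr ▸ h]
  refine ⟨ineq1, ineq2, htrre, ?_⟩
  rw [htrre]
  have habs : ‖σ (0,0) (1,1)‖ ≤ 1/2 - x := by
    nlinarith [norm_nonneg (σ (0,0) (1,1)), ineq2]
  have hre := Complex.re_le_norm (σ (0,0) (1,1))
  have : (σ (0,0) (1,1)).re ≤ 1/2 - (σ (0,0) (0,0)).re := le_trans hre habs
  linarith
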